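/- Under the hypotheses of the error-system theorem above, the model-correction error satisfies $\|e_u\| \leq \frac{1}{2}p_u + \sqrt{\frac{1}{4}p_u^2 + q_u}$, where $p_u = \|r_u\|_{\mathcal{U}'} + \frac{\gamma_b}{\alpha}\|r_p\|_{\mathcal{Y}'}$ and $q_u = \frac{2}{\alpha}\|r_p\|_{\mathcal{Y}'}\|r_y\|_{\mathcal{Y}'} + \frac{\lambda}{4\alpha^2}\|r_y\|_{\mathcal{Y}'}^2$. -/

import Mathlib

/-!
Testing the four error equations with `e_u`, `e_y`, `e_p`, `e_d` and eliminating the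
bilinear forms gives the energy identity
`‖e_u‖² = r_u(e_u) + r_p(e_y) - r_y(e_p) - λ‖e_d‖²`.
Coercivity bounds `α‖e_y‖` by `γ_b‖e_u‖ + ‖r_y‖` and `α‖e_p‖` by `λ‖e_d‖ + ‖r_p‖`;
the resulting term `λ(‖r_y‖‖e_d‖/α - ‖e_d‖²)` is at most `λ‖r_y‖²/(4α²)` by Young's
inequality. This leaves a quadratic inequality `‖e_u‖² ≤ p_u‖e_u‖ + q_u`, whose larger
root is the stated bound.
-/

lemma le_half_add_sqrt_of_sq_le_mul_add {x p q : ℝ} (h : x ^ 2 ≤ p * x + q) :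
    x ≤ (1 / 2) * p + Real.sqrt ((1 / 4) * p ^ 2 + q) := by
  have hroot : x - p / 2 ≤ Real.sqrt ((1 / 4) * p ^ 2 + q) :=
    calc x - p / 2 ≤ |x - p / 2| := le_abs_self _
      _ = Real.sqrt ((x - p / 2) ^ 2) := (Real.sqrt_sq_eq_abs _).symm
      _ ≤ Real.sqrt ((1 / 4) * p ^ 2 + q) := Real.sqrt_le_sqrt (by nlinarith)
  linarith

lemma mul_le_of_mul_sq_le_mul {α x c : ℝ} (hx : 0 ≤ x) (hc : 0 ≤ c)
    (h : α * x ^ 2 ≤ c * x) : α * x ≤ c := by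
  rcases hx.eq_or_lt with rfl | hx
  · simpa using hc
  · exact le_of_mul_le_mul_right (by nlinarith) hx

lemma ContinuousLinearMap.apply_le_opNorm_mul {E : Type*} [SeminormedAddCommGroup E]
    [NormedSpace ℝ E] (r : E →L[ℝ] ℝ) (x : E) : r x ≤ ‖r‖ * ‖x‖ :=
  (le_abs_self _).trans (r.le_opNorm x)

lemma mul_norm_nonneg_of_abs_le {U Y : Type*} [SeminormedAddCommGroup U]
    [NormedAddCommGroup Y] [Nontrivial Y] {b : U → Y → ℝ} {γb : ℝ}
    (hb : ∀ u ψ, |b u ψ| ≤ γb * ‖u‖ * ‖ψ‖) (u : U) : 0 ≤ γb * ‖u‖ := by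
  obtain ⟨ψ, hψ⟩ := exists_ne (0 : Y)
  have hψpos : 0 < ‖ψ‖ := norm_pos_iff.mpr hψ
  have := (abs_nonneg _).trans (hb u ψ)
  nlinarith

lemma sq_le_of_energy_identity {α lam γb u d Ru Rp Ry s t v : ℝ} (hα : 0 < α) (hlam : 0 ≤ lam)
    (henergy : u ^ 2 = s + t - v - lam * d ^ 2) (hs : s ≤ Ru * u)
    (ht : α * t ≤ Rp * (γb * u + Ry)) (hv : α * -v ≤ Ry * (lam * d + Rp)) :
    u ^ 2 ≤ (Ru + γb / α * Rp) * u + (2 / α * Rp * Ry + lam / (4 * α ^ 2) * Ry ^ 2) := by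
  set X := (Ru + γb / α * Rp) * u + (2 / α * Rp * Ry + lam / (4 * α ^ 2) * Ry ^ 2) with hX
  have hα2 : 0 < α ^ 2 := by positivity
  -- the square in `d` is Young's inequality `α Ry d ≤ α² d² + Ry² / 4`
  have hgap : α ^ 2 * (X - u ^ 2) = α ^ 2 * (Ru * u - s) + α * (Rp * (γb * u + Ry) - α * t)
      + α * (Ry * (lam * d + Rp) - α * -v) + lam * (Ry / 2 - α * d) ^ 2 := by
    rw [hX, henergy]
    field_simp
    ring
  have hgap_nonneg : 0 ≤ α ^ 2 * (X - u ^ 2) := by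
    rw [hgap]
    exact add_nonneg (add_nonneg (add_nonneg (mul_nonneg hα2.le (sub_nonneg.mpr hs))
      (mul_nonneg hα.le (sub_nonneg.mpr ht))) (mul_nonneg hα.le (sub_nonneg.mpr hv)))
      (mul_nonneg hlam (sq_nonneg _))
  exact sub_nonneg.mp ((mul_nonneg_iff_of_pos_left hα2).mp hgap_nonneg)

namespace ErrorSystem

variable {U Y : Type*} [NormedAddCommGroup U] [InnerProductSpace ℝ U]
  [NormedAddCommGroup Y] [InnerProductSpace ℝ Y]
  {T : Submodule ℝ Y} {a : Y →ₗ[ℝ] Y →ₗ[ℝ] ℝ} {b : U →ₗ[ℝ] Y →ₗ[ℝ] ℝ} {α γb lam : ℝ}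
  {e_u : U} {e_y e_d e_p : Y} {r_u : U →L[ℝ] ℝ} {r_p r_y : Y →L[ℝ] ℝ}

lemma norm_sq_eq_residuals (hed : e_d ∈ T)
    (h1 : ∀ φ : U, (inner ℝ e_u φ : ℝ) - b φ e_p = r_u φ)
    (h2 : ∀ ψ : Y, a ψ e_p - lam * (inner ℝ e_d ψ : ℝ) = r_p ψ)
    (h3 : ∀ ψ : Y, a e_y ψ - b e_u ψ = r_y ψ)
    (h4 : ∀ τ ∈ T, (inner ℝ (e_y + e_d) τ : ℝ) = 0) :
    ‖e_u‖ ^ 2 = r_u e_u + r_p e_y - r_y e_p - lam * ‖e_d‖ ^ 2 := by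
  have hu := h1 e_u
  have hd := h4 e_d hed
  rw [inner_add_left, real_inner_comm] at hd
  rw [real_inner_self_eq_norm_sq] at hu hd
  linear_combination hu + h2 e_y - h3 e_p + lam * hd

lemma mul_norm_ep_le (hcoer : ∀ y : Y, α * ‖y‖ ^ 2 ≤ a y y) (hlam : 0 ≤ lam)
    (h2 : ∀ ψ : Y, a ψ e_p - lam * (inner ℝ e_d ψ : ℝ) = r_p ψ) :
    α * ‖e_p‖ ≤ lam * ‖e_d‖ + ‖r_p‖ := by
  refine mul_le_of_mul_sq_le_mul (norm_nonneg _) (by positivity) ?_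
  have hp := h2 e_p
  have hcs := mul_le_mul_of_nonneg_left (real_inner_le_norm e_d e_p) hlam
  have hr := r_p.apply_le_opNorm_mul e_p
  nlinarith [hcoer e_p]

lemma mul_norm_ey_le [Nontrivial Y] (hcoer : ∀ y : Y, α * ‖y‖ ^ 2 ≤ a y y)
    (hb : ∀ (u : U) (ψ : Y), |b u ψ| ≤ γb * ‖u‖ * ‖ψ‖)
    (h3 : ∀ ψ : Y, a e_y ψ - b e_u ψ = r_y ψ) :
    α * ‖e_y‖ ≤ γb * ‖e_u‖ + ‖r_y‖ := by
  have hγ := mul_norm_nonneg_of_abs_le hb e_u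
  refine mul_le_of_mul_sq_le_mul (norm_nonneg _) (by positivity) ?_
  have hy := h3 e_y
  have hbb := (le_abs_self _).trans (hb e_u e_y)
  have hr := r_y.apply_le_opNorm_mul e_y
  nlinarith [hcoer e_y]

lemma mul_rp_ey_le (hα : 0 ≤ α) (hcoer : ∀ y : Y, α * ‖y‖ ^ 2 ≤ a y y)
    (hb : ∀ (u : U) (ψ : Y), |b u ψ| ≤ γb * ‖u‖ * ‖ψ‖)
    (h3 : ∀ ψ : Y, a e_y ψ - b e_u ψ = r_y ψ) :
    α * r_p e_y ≤ ‖r_p‖ * (γb * ‖e_u‖ + ‖r_y‖) := by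
  -- on a trivial `Y`, `hb` does not force `0 ≤ γb`
  rcases subsingleton_or_nontrivial Y with _ | _
  · simp [Subsingleton.elim e_y 0, r_p.opNorm_subsingleton]
  calc α * r_p e_y ≤ α * (‖r_p‖ * ‖e_y‖) :=
        mul_le_mul_of_nonneg_left (r_p.apply_le_opNorm_mul e_y) hα
    _ = ‖r_p‖ * (α * ‖e_y‖) := by ring
    _ ≤ ‖r_p‖ * (γb * ‖e_u‖ + ‖r_y‖) :=
        mul_le_mul_of_nonneg_left (mul_norm_ey_le hcoer hb h3) (norm_nonneg _)

lemma mul_neg_ry_ep_le (hα : 0 ≤ α) (hcoer : ∀ y : Y, α * ‖y‖ ^ 2 ≤ a y y) (hlam : 0 ≤ lam)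
    (h2 : ∀ ψ : Y, a ψ e_p - lam * (inner ℝ e_d ψ : ℝ) = r_p ψ) :
    α * -r_y e_p ≤ ‖r_y‖ * (lam * ‖e_d‖ + ‖r_p‖) :=
  calc α * -r_y e_p = α * r_y (-e_p) := by rw [map_neg]
    _ ≤ α * (‖r_y‖ * ‖e_p‖) := by
        simpa only [norm_neg] using mul_le_mul_of_nonneg_left (r_y.apply_le_opNorm_mul (-e_p)) hα
    _ = ‖r_y‖ * (α * ‖e_p‖) := by ring
    _ ≤ ‖r_y‖ * (lam * ‖e_d‖ + ‖r_p‖) :=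
        mul_le_mul_of_nonneg_left (mul_norm_ep_le hcoer hlam h2) (norm_nonneg _)

end ErrorSystem

open ErrorSystem in
/-- a posteriori bound for the model-correction error ‖e_u‖. -/
theorem stmt11 {U Y : Type*}
    [NormedAddCommGroup U] [InnerProductSpace ℝ U]
    [NormedAddCommGroup Y] [InnerProductSpace ℝ Y]
    (T : Submodule ℝ Y)
    (a : Y →ₗ[ℝ] Y →ₗ[ℝ] ℝ) (b : U →ₗ[ℝ] Y →ₗ[ℝ] ℝ)
    (α : ℝ) (hα : 0 < α) (hcoer : ∀ y : Y, α * ‖y‖ ^ 2 ≤ a y y)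
    (γb : ℝ) (hb : ∀ (u : U) (ψ : Y), |b u ψ| ≤ γb * ‖u‖ * ‖ψ‖)
    (lam : ℝ) (hlam : 0 < lam)
    (e_u : U) (e_y e_d e_p : Y) (hed : e_d ∈ T)
    (r_u : U →L[ℝ] ℝ) (r_p r_y : Y →L[ℝ] ℝ)
    (h1 : ∀ φ : U, (inner ℝ e_u φ : ℝ) - b φ e_p = r_u φ)
    (h2 : ∀ ψ : Y, a ψ e_p - lam * (inner ℝ e_d ψ : ℝ) = r_p ψ)
    (h3 : ∀ ψ : Y, a e_y ψ - b e_u ψ = r_y ψ)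
    (h4 : ∀ τ ∈ T, (inner ℝ (e_y + e_d) τ : ℝ) = 0) :
    ‖e_u‖ ≤ (1 / 2) * (‖r_u‖ + (γb / α) * ‖r_p‖) +
      Real.sqrt ((1 / 4) * (‖r_u‖ + (γb / α) * ‖r_p‖) ^ 2 +
        ((2 / α) * ‖r_p‖ * ‖r_y‖ + (lam / (4 * α ^ 2)) * ‖r_y‖ ^ 2)) := by
  have henergy := norm_sq_eq_residuals hed h1 h2 h3 h4
  exact le_half_add_sqrt_of_sq_le_mul_add <| sq_le_of_energy_identity hα hlam.le henergy
    (r_u.apply_le_opNorm_mul e_u) (mul_rp_ey_le hα.le hcoer hb h3)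
    (mul_neg_ry_ep_le hα.le hcoer hlam.le h2)
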